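/- Let C be an (n, M, d=2δ, k)_q constant dimension code with 1 ≤ δ ≤ k ≤ n−k, let v_1 be the binary vector 1^k 0^{n−k} (ones in the first k coordinates), and let C_1 = { X ∈ C : v(X) = v_1 }. If |C_1| = q^{(k−δ+1)(n−k)}, then every codeword Y ∈ C with d_H(v(Y), v_1) < 2δ satisfies v(Y) = v_1 (i.e., Y ∈ C_1); equivalently, there is no codeword Y ∈ C with 0 < d_H(v(Y), v_1) < 2δ. -/

import Mathlib

/-- `M` is in reduced row echelon form with pivot (leading-one) column of row `i`
given by `piv i`: pivots strictly move right, each leading coefficient is `1`,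
it is the first nonzero entry of its row, and it is the only nonzero entry of
its column. -/
def IsRREFWithPivots {F : Type*} [Field F] {k n : ℕ}
    (M : Matrix (Fin k) (Fin n) F) (piv : Fin k → Fin n) : Prop :=
  StrictMono piv ∧
  (∀ i, M i (piv i) = 1) ∧
  (∀ (i : Fin k) (j : Fin n), j < piv i → M i j = 0) ∧
  (∀ i i' : Fin k, i' ≠ i → M i' (piv i) = 0)

/-- `M` is in reduced row echelon form. -/
def IsRREF {F : Type*} [Field F] {k n : ℕ} (M : Matrix (Fin k) (Fin n) F) : Prop :=
  ∃ piv, IsRREFWithPivots M piv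

/-- The identifying (binary) vector associated with pivot columns `piv`:
its ones are exactly in the pivot positions. -/
def idVec {k n : ℕ} (piv : Fin k → Fin n) : Fin n → Bool :=
  fun j => decide (∃ i, piv i = j)

/-- The subspace distance `d_S(X,Y) = dim X + dim Y - 2 dim (X ⊓ Y)`. -/
noncomputable def subDist {F : Type*} [Field F] {n : ℕ} (X Y : Submodule F (Fin n → F)) : ℕ :=
  Module.finrank F X + Module.finrank F Y - 2 * Module.finrank F ↥(X ⊓ Y)

/-! The rows of `RE(Y)` with pivot among the first `k` columns number more than `k - δ`, because
`d_H(v(Y), v₁)` is twice the number of pivots outside them; pick `k - δ + 1` of them, `y_s`.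
Every `X ∈ C₁` is the row space of some `[I_k | A_X]`, so it contains exactly one vector `w_{X,s}`
agreeing with `y_s` on the first `k` coordinates. The tails of the `w_{X,s}` determine `X`: two
members of `C₁` sharing them meet in dimension `k - δ + 1`, too much for distance `2δ`. Since
`|C₁| = q^((k-δ+1)(n-k))` is the number of possible tails, some `X ∈ C₁` contains every `y_s`,
whence `X = Y` by the same dimension count. But `Y` has a nonzero row vanishing on the first `k`
coordinates, and no member of `C₁` does. -/

open Finset Function Module

section Linear

variable {F V : Type*} [Field F] [AddCommGroup V] [Module F V]

theorem card_le_finrank_of_linearIndependent [FiniteDimensional F V] {ι : Type*} [Fintype ι]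
    {v : ι → V} (hv : LinearIndependent F v) {W : Submodule F V} (hW : ∀ i, v i ∈ W) :
    Fintype.card ι ≤ finrank F W := by
  rw [← finrank_span_eq_card hv]
  exact Submodule.finrank_mono (Submodule.span_le.2 (Set.range_subset_iff.2 hW))

theorem linearIndependent_of_apply_eq_ite {ι κ : Type*} [DecidableEq ι] {u : ι → κ → F}
    (col : ι → κ) (h : ∀ i i', u i (col i') = if i = i' then 1 else 0) :
    LinearIndependent F u := by
  refine LinearIndependent.of_comp (LinearMap.funLeft F F col) ?_
  convert Pi.linearIndependent_single_one ι F with i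
  ext i'
  simp [LinearMap.funLeft_apply, h, Pi.single_apply, eq_comm]

theorem exists_mem_forall_mem_of_natCard_eq [FiniteDimensional F V] {W T ι : Type*}
    [AddCommGroup W] [Module F W] [Finite T] [Fintype ι]
    (p : V →ₗ[F] W) (t : V → T) (hpt : ∀ x y, p x = p y → t x = t y → x = y)
    {S : Set (Submodule F V)} (hcard : Nat.card S = Nat.card (ι → T))
    (hSp : ∀ X ∈ S, X.map p = ⊤)
    (hS : ∀ X ∈ S, ∀ X' ∈ S, Fintype.card ι ≤ finrank F ↥(X ⊓ X') → X = X')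
    {y : ι → V} (hy : LinearIndependent F (p ∘ y)) : ∃ X ∈ S, ∀ i, y i ∈ X := by
  have hlift : ∀ X : S, ∀ i, ∃ w ∈ (X : Submodule F V), p w = p (y i) := fun X i => by
    rw [← Submodule.mem_map, hSp X X.2]
    trivial
  choose w hwX hpw using hlift
  have hinj : Injective fun X i => t (w X i) := by
    intro X X' h
    have hww : ∀ i, w X i = w X' i :=
      fun i => hpt _ _ ((hpw X i).trans (hpw X' i).symm) (congrFun h i)
    have hind : LinearIndependent F (w X) :=
      LinearIndependent.of_comp p (by convert hy using 1; exact funext (hpw X))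
    exact Subtype.ext (hS _ X.2 _ X'.2 (card_le_finrank_of_linearIndependent hind
      fun i => ⟨hwX X i, hww i ▸ hwX X' i⟩))
  obtain ⟨X, hX⟩ := ((Nat.bijective_iff_injective_and_card _).2 ⟨hinj, hcard⟩).2 (t ∘ y)
  exact ⟨X, X.2, fun i => hpt _ _ (hpw X i) (congrFun hX i) ▸ hwX X i⟩

end Linear

theorem eq_of_le_finrank_inf {F : Type*} [Field F] {n k δ r : ℕ}
    {X Y : Submodule F (Fin n → F)} (hX : finrank F X = k) (hY : finrank F Y = k)
    (hXY : X ≠ Y → 2 * δ ≤ subDist X Y) (hr : k < r + δ) (hrXY : r ≤ finrank F ↥(X ⊓ Y)) :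
    X = Y := by
  by_contra hne
  have := hXY hne
  have := Submodule.finrank_mono (inf_le_left : X ⊓ Y ≤ X)
  unfold subDist at *
  omega

theorem eq_of_prefix_eq_of_suffix_eq {α : Type*} {k n : ℕ} (hkn : k ≤ n) {x y : Fin n → α}
    (hpre : x ∘ Fin.castLE hkn = y ∘ Fin.castLE hkn)
    (hsuf : (fun j : Fin (n - k) => x ⟨k + j, by omega⟩) =
      fun j : Fin (n - k) => y ⟨k + j, by omega⟩) :
    x = y := by
  funext j
  by_cases hj : (j : ℕ) < k
  · exact congrFun hpre ⟨j, hj⟩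
  · simpa [show k + (j - k : ℕ) = j by omega] using congrFun hsuf ⟨j - k, by omega⟩

theorem hammingDist_idVec {k n : ℕ} {piv : Fin k → Fin n} (hpiv : Injective piv)
    (A : Fin n → Prop) [DecidablePred A] (hA : #{j | A j} = k) :
    hammingDist (idVec piv) (fun j => decide (A j)) = 2 * #{i | ¬ A (piv i)} := by
  have hsplit : ({j | idVec piv j ≠ decide (A j)} : Finset (Fin n)) =
      (univ.image piv \ univ.filter A) ∪ (univ.filter A \ univ.image piv) := by
    ext j
    simp only [idVec, mem_filter, mem_univ, true_and, mem_union, mem_sdiff, mem_image]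
    by_cases h : ∃ i, piv i = j <;> by_cases hj : A j <;> simp [h, hj]
  have himage :
      univ.image piv \ univ.filter A = ({i | ¬ A (piv i)} : Finset (Fin k)).image piv := by
    ext j; simp only [mem_sdiff, mem_image, mem_filter, mem_univ, true_and]; grind
  have hcomm := card_sdiff_comm (s := univ.image piv) (t := univ.filter A)
    (by rw [card_image_of_injective _ hpiv, card_univ, Fintype.card_fin, hA])
  rw [hammingDist, hsplit, card_union_of_disjoint disjoint_sdiff_sdiff, ← hcomm, himage,
    card_image_of_injective _ hpiv]
  ring

theorem eq_castLE_of_idVec_eq {k n : ℕ} {piv : Fin k → Fin n} (hpiv : StrictMono piv)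
    (hkn : k ≤ n) (h : idVec piv = fun j : Fin n => decide ((j : ℕ) < k)) :
    piv = Fin.castLE hkn := by
  refine (hpiv.range_inj (Fin.strictMono_castLE hkn)).1 ?_
  ext j
  simpa [Fin.range_castLE, idVec] using congrFun h j

namespace IsRREFWithPivots

variable {F : Type*} [Field F] {k n : ℕ} {M : Matrix (Fin k) (Fin n) F} {piv : Fin k → Fin n}

theorem apply_pivot (h : IsRREFWithPivots M piv) (i i' : Fin k) :
    M i (piv i') = if i = i' then 1 else 0 := by
  split_ifs with hii
  · exact hii ▸ h.2.1 i
  · exact h.2.2.2 i' i hii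

theorem linearIndependent (h : IsRREFWithPivots M piv) : LinearIndependent F M :=
  linearIndependent_of_apply_eq_ite piv h.apply_pivot

theorem linearIndependent_comp_castLE (h : IsRREFWithPivots M piv) (hkn : k ≤ n) {ι : Type*}
    [DecidableEq ι] {r : ι → Fin k} (hr : Injective r) (hrk : ∀ i, (piv (r i) : ℕ) < k) :
    LinearIndependent F fun i => M (r i) ∘ Fin.castLE hkn :=
  linearIndependent_of_apply_eq_ite (fun i => ⟨piv (r i), hrk i⟩) fun i i' => by
    simpa [hr.eq_iff] using h.apply_pivot (r i) (r i')

theorem comp_castLE_eq_zero (h : IsRREFWithPivots M piv) (hkn : k ≤ n) {i : Fin k}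
    (hi : k ≤ (piv i : ℕ)) : M i ∘ Fin.castLE hkn = 0 :=
  funext fun j => h.2.2.1 i _ (by rw [Fin.lt_def]; simp; omega)

variable {hkn : k ≤ n}

theorem map_span_eq_top (h : IsRREFWithPivots M (Fin.castLE hkn)) :
    (Submodule.span F (Set.range M)).map (LinearMap.funLeft F F (Fin.castLE hkn)) = ⊤ := by
  have hM : ⇑(Pi.basisFun F (Fin k)) = fun i => M i ∘ Fin.castLE hkn := funext fun i => by
    ext j
    simp [h.apply_pivot, Pi.single_apply, eq_comm]
  rw [Submodule.map_span, ← (Pi.basisFun F (Fin k)).span_eq, hM]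
  congr 1
  exact (Set.range_comp _ (M : Fin k → Fin n → F)).symm

theorem eq_zero_of_mem_span (h : IsRREFWithPivots M (Fin.castLE hkn)) {x : Fin n → F}
    (hx : x ∈ Submodule.span F (Set.range M)) (hx0 : x ∘ Fin.castLE hkn = 0) : x = 0 := by
  obtain ⟨c, rfl⟩ := (Submodule.mem_span_range_iff_exists_fun F).1 hx
  have hc : ∀ j, c j = 0 := fun j => by
    simpa [Finset.sum_apply, h.apply_pivot] using congrFun hx0 j
  simp [hc]

end IsRREFWithPivots

theorem no_close_identifying_vector_first_general {F : Type*} [Field F] [Fintype F]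
    {n k δ : ℕ} (hδk : δ ≤ k)
    (C : Set (Submodule F (Fin n → F)))
    (hdim : ∀ X ∈ C, Module.finrank F X = k)
    (hdist : ∀ X ∈ C, ∀ Y ∈ C, X ≠ Y → 2 * δ ≤ subDist X Y)
    (v1 : Fin n → Bool) (hv1 : v1 = fun j : Fin n => decide ((j : ℕ) < k))
    (hC1 : Nat.card ↥{X | X ∈ C ∧
        ∃ (M : Matrix (Fin k) (Fin n) F) (piv : Fin k → Fin n),
          IsRREFWithPivots M piv ∧ Submodule.span F (Set.range M) = X ∧
          idVec piv = v1} =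
      Fintype.card F ^ ((k - δ + 1) * (n - k))) :
    ∀ Y ∈ C, ∀ (MY : Matrix (Fin k) (Fin n) F) (pivY : Fin k → Fin n),
      IsRREFWithPivots MY pivY → Submodule.span F (Set.range MY) = Y →
      hammingDist (idVec pivY) v1 < 2 * δ → idVec pivY = v1 := by
  intro Y hY MY pivY hRY hSpanY hH
  by_contra hne
  subst hv1
  have hkn : k ≤ n := by simpa using Fintype.card_le_of_injective _ hRY.1.injective
  have hdH := hammingDist_idVec hRY.1.injective (fun j : Fin n => (j : ℕ) < k)
    (by simp [Fin.card_filter_val_lt, hkn])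
  simp only [not_lt] at hdH
  obtain ⟨i₀, hi₀⟩ : ∃ i, k ≤ (pivY i : ℕ) := by
    by_contra! h
    exact hne (hammingDist_eq_zero.1 (by simp [hdH, h]))
  have hlow : k - δ + 1 ≤ #{i | (pivY i : ℕ) < k} := by
    have := card_filter_add_card_filter_not (s := univ) fun i => (pivY i : ℕ) < k
    simp only [card_univ, Fintype.card_fin, not_lt] at this
    omega
  obtain ⟨t, htP, htcard⟩ := exists_subset_card_eq hlow
  obtain ⟨X, ⟨hXC, MX, pivX, hRX, rfl, hvX⟩, hYX⟩ := exists_mem_forall_mem_of_natCard_eq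
    (LinearMap.funLeft F F (Fin.castLE hkn)) (fun x (j : Fin (n - k)) => x ⟨k + j, by omega⟩)
    (fun x y hpre hsuf => eq_of_prefix_eq_of_suffix_eq hkn hpre hsuf) (y := fun i : t => MY i)
    (hC1.trans (by simp [htcard, ← pow_mul, mul_comm]))
    (by
      rintro _ ⟨-, M, piv, hR, rfl, hv⟩
      exact (eq_castLE_of_idVec_eq hR.1 hkn hv ▸ hR).map_span_eq_top)
    (fun X hX X' hX' => eq_of_le_finrank_inf (hdim _ hX.1) (hdim _ hX'.1) (hdist _ hX.1 _ hX'.1)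
      (by simp only [Fintype.card_coe, htcard]; omega))
    (hRY.linearIndependent_comp_castLE hkn Subtype.val_injective fun i => by simpa using htP i.2)
  rw [eq_castLE_of_idVec_eq hRX.1 hkn hvX] at hRX
  have hXY : Submodule.span F (Set.range MX) ≠ Y := fun hXY => hRY.linearIndependent.ne_zero i₀
    (hRX.eq_zero_of_mem_span (hXY ▸ hSpanY ▸ Submodule.subset_span ⟨i₀, rfl⟩)
      (hRY.comp_castLE_eq_zero hkn hi₀))
  have hrows : #t ≤ finrank F ↥(Submodule.span F (Set.range MX) ⊓ Y) := by
    simpa using card_le_finrank_of_linearIndependent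
      (hRY.linearIndependent.comp _ Subtype.val_injective)
      fun i : t => Submodule.mem_inf.2 ⟨hYX i, hSpanY ▸ Submodule.subset_span ⟨i, rfl⟩⟩
  exact hXY (eq_of_le_finrank_inf (hdim _ hXC) (hdim _ hY) (hdist _ hXC _ hY) (by omega) hrows)

/-- **Lemma 5 of the paper.** Let `C` be an `(n, M, d = 2δ, k)_q`
constant dimension code with `1 ≤ δ ≤ k ≤ n - k`, let `v₁ = 1^k 0^(n-k)`, and
let `C₁ = {X ∈ C : v(X) = v₁}`. If `|C₁| = q^((k-δ+1)(n-k))`, then every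
codeword `Y ∈ C` with `d_H(v(Y), v₁) < 2δ` satisfies `v(Y) = v₁`. -/
theorem no_close_identifying_vector_first {F : Type*} [Field F] [Fintype F]
    {n k δ : ℕ} (hδ1 : 1 ≤ δ) (hδk : δ ≤ k) (hk : k ≤ n - k)
    (C : Set (Submodule F (Fin n → F)))
    (hdim : ∀ X ∈ C, Module.finrank F X = k)
    (hdist : ∀ X ∈ C, ∀ Y ∈ C, X ≠ Y → 2 * δ ≤ subDist X Y)
    (v1 : Fin n → Bool) (hv1 : v1 = fun j : Fin n => decide ((j : ℕ) < k))
    (hC1 : Nat.card ↥{X | X ∈ C ∧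
        ∃ (M : Matrix (Fin k) (Fin n) F) (piv : Fin k → Fin n),
          IsRREFWithPivots M piv ∧ Submodule.span F (Set.range M) = X ∧
          idVec piv = v1} =
      Fintype.card F ^ ((k - δ + 1) * (n - k))) :
    ∀ Y ∈ C, ∀ (MY : Matrix (Fin k) (Fin n) F) (pivY : Fin k → Fin n),
      IsRREFWithPivots MY pivY → Submodule.span F (Set.range MY) = Y →
      hammingDist (idVec pivY) v1 < 2 * δ → idVec pivY = v1 :=
  no_close_identifying_vector_first_general hδk C hdim hdist v1 hv1 hC1
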